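/- arXiv:2302.01868 — 2 statements merged into one kernel-verified Lean document; each statement's English description precedes it below -/
import Mathlib

section
/- Let A be an associative unital algebra, I an ideal of A, and G a subgroup of the units of A contained in 1 + I. If I is strongly Lie solvable (i.e., I^(n) = {0} for some n, where I^(0) = I and I^(n+1) = [I^(n), I^(n)]·A), then G is solvable and the derived length of G is at most the strong Lie derived length of I. -/
/-- The span of Lie brackets `[u,v] = u*v - v*u` with `u ∈ U`, `v ∈ V`. -/
def lieBracketSpan (K : Type*) {A : Type*} [Field K] [Ring A] [Algebra K A]
    (U V : Submodule K A) : Submodule K A :=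
  Submodule.span K {z | ∃ u ∈ U, ∃ v ∈ V, z = u * v - v * u}

/-- The span of products `u * a` with `u ∈ U`, `a ∈ A`. -/
def mulASpan (K : Type*) {A : Type*} [Field K] [Ring A] [Algebra K A]
    (U : Submodule K A) : Submodule K A :=
  Submodule.span K {z | ∃ u ∈ U, ∃ a : A, z = u * a}

/-- The strong Lie derived series `I⁽⁰⁾ = I`, `I⁽ⁿ⁺¹⁾ = [I⁽ⁿ⁾, I⁽ⁿ⁾]·A`. -/
def strongDerivedSeries (K : Type*) {A : Type*} [Field K] [Ring A] [Algebra K A]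
    (I : Submodule K A) : ℕ → Submodule K A
  | 0 => I
  | n + 1 =>
      mulASpan K (lieBracketSpan K (strongDerivedSeries K I n) (strongDerivedSeries K I n))

section Aux
variable {K A : Type*} [Field K] [Ring A] [Algebra K A]

lemma bracket_mem (U V : Submodule K A) {u v : A} (hu : u ∈ U) (hv : v ∈ V) :
    u * v - v * u ∈ lieBracketSpan K U V :=
  Submodule.subset_span ⟨u, hu, v, hv, rfl⟩

lemma mulA_mem (U : Submodule K A) {u : A} (hu : u ∈ U) (a : A) :
    u * a ∈ mulASpan K U :=
  Submodule.subset_span ⟨u, hu, a, rfl⟩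

lemma mulASpan_mul_mem (U : Submodule K A) {x : A} (hx : x ∈ mulASpan K U) (b : A) :
    x * b ∈ mulASpan K U := by
  induction hx using Submodule.span_induction with
  | mem z hz =>
    obtain ⟨u, hu, a, rfl⟩ := hz
    exact Submodule.subset_span ⟨u, hu, a * b, mul_assoc u a b⟩
  | zero => simpa using (mulASpan K U).zero_mem
  | add x y _ _ hx hy => simpa [add_mul] using Submodule.add_mem _ hx hy
  | smul c x _ hx => simpa [smul_mul_assoc] using Submodule.smul_mem _ c hx

lemma aux_left (J : Submodule K A) (hJ : ∀ a : A, ∀ x ∈ J, a * x ∈ J ∧ x * a ∈ J)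
    (a : A) {w : A} (hw : w ∈ lieBracketSpan K J J) :
    a * w ∈ mulASpan K (lieBracketSpan K J J) := by
  induction hw using Submodule.span_induction with
  | mem z hz =>
    obtain ⟨u, hu, v, hv, rfl⟩ := hz
    have h1 : a * u - u * a ∈ J := Submodule.sub_mem _ (hJ a u hu).1 (hJ a u hu).2
    have h2 : a * v - v * a ∈ J := Submodule.sub_mem _ (hJ a v hv).1 (hJ a v hv).2
    have key : a * (u * v - v * u) =
        (u * v - v * u) * a +
          (((a * u - u * a) * v - v * (a * u - u * a)) * 1 +
           ((u * (a * v - v * a) - (a * v - v * a) * u)) * 1) := by noncomm_ring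
    rw [key]
    exact Submodule.add_mem _ (mulA_mem _ (bracket_mem _ _ hu hv) a)
      (Submodule.add_mem _ (mulA_mem _ (bracket_mem _ _ h1 hv) 1)
        (mulA_mem _ (bracket_mem _ _ hu h2) 1))
  | zero => simpa using (mulASpan K (lieBracketSpan K J J)).zero_mem
  | add x y _ _ hx hy => simpa [mul_add] using Submodule.add_mem _ hx hy
  | smul c x _ hx => simpa [mul_smul_comm] using Submodule.smul_mem _ c hx

lemma next_ideal (J : Submodule K A) (hJ : ∀ a : A, ∀ x ∈ J, a * x ∈ J ∧ x * a ∈ J) :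
    ∀ a : A, ∀ x ∈ mulASpan K (lieBracketSpan K J J),
      a * x ∈ mulASpan K (lieBracketSpan K J J) ∧
      x * a ∈ mulASpan K (lieBracketSpan K J J) := by
  intro a x hx
  refine ⟨?_, mulASpan_mul_mem _ hx a⟩
  induction hx using Submodule.span_induction with
  | mem z hz =>
    obtain ⟨w, hw, b, rfl⟩ := hz
    rw [← mul_assoc]
    exact mulASpan_mul_mem _ (aux_left J hJ a hw) b
  | zero => simpa using (mulASpan K (lieBracketSpan K J J)).zero_mem
  | add x y _ _ hx hy => simpa [mul_add] using Submodule.add_mem _ hx hy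
  | smul c x _ hx => simpa [mul_smul_comm] using Submodule.smul_mem _ c hx

end Aux


section Grp
open scoped commutatorElement
variable {K A : Type*} [Field K] [Ring A] [Algebra K A]

lemma series_ideal (I : Submodule K A) (hI : ∀ a : A, ∀ x ∈ I, a * x ∈ I ∧ x * a ∈ I) :
    ∀ n, ∀ a : A, ∀ x ∈ strongDerivedSeries K I n,
      a * x ∈ strongDerivedSeries K I n ∧ x * a ∈ strongDerivedSeries K I n := by
  intro n
  induction n with
  | zero => exact hI
  | succ n ih => exact next_ideal _ ih

def memSubgroup (G : Subgroup Aˣ) (J : Submodule K A)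
    (hJ : ∀ a : A, ∀ x ∈ J, a * x ∈ J ∧ x * a ∈ J) : Subgroup G where
  carrier := {g | ((g : Aˣ) : A) - 1 ∈ J}
  one_mem' := by simp
  mul_mem' := by
    intro g h hg hh
    have key : (((g * h : G) : Aˣ) : A) - 1 =
        (((g : Aˣ) : A) - 1) * (((h : Aˣ) : A) - 1) +
          ((((g : Aˣ) : A) - 1) + (((h : Aˣ) : A) - 1)) := by
      push_cast
      noncomm_ring
    rw [Set.mem_setOf_eq, key]
    exact Submodule.add_mem _ (hJ _ _ hh).1 (Submodule.add_mem _ hg hh)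
  inv_mem' := by
    intro g hg
    have key : (((g⁻¹ : G) : Aˣ) : A) - 1 =
        -((((g : Aˣ)⁻¹ : Aˣ) : A) * (((g : Aˣ) : A) - 1)) := by
      push_cast
      rw [mul_sub, Units.inv_mul, mul_one]
      noncomm_ring
    rw [Set.mem_setOf_eq, key]
    exact Submodule.neg_mem _ (hJ _ _ hg).1

lemma main_induction (I : Submodule K A) (hI : ∀ a : A, ∀ x ∈ I, a * x ∈ I ∧ x * a ∈ I)
    (G : Subgroup Aˣ) (hG : ∀ g ∈ G, ((g : Aˣ) : A) - 1 ∈ I) :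
    ∀ n, ∀ g : G, g ∈ derivedSeries G n →
      ((g : Aˣ) : A) - 1 ∈ strongDerivedSeries K I n := by
  intro n
  induction n with
  | zero => intro g _; exact hG g g.2
  | succ n ih =>
    have hJ := series_ideal I hI n
    have hle : derivedSeries G (n + 1) ≤
        memSubgroup G (strongDerivedSeries K I (n + 1)) (next_ideal _ hJ) := by
      rw [derivedSeries_succ, Subgroup.commutator_le]
      intro p hp q hq
      set x : A := ((p : Aˣ) : A)
      set y : A := ((q : Aˣ) : A)
      set x' : A := (((p : Aˣ)⁻¹ : Aˣ) : A)
      set y' : A := (((q : Aˣ)⁻¹ : Aˣ) : A)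
      have hx : x * x' = 1 := Units.mul_inv _
      have hy : y * y' = 1 := Units.mul_inv _
      have key : ((x - 1) * (y - 1) - (y - 1) * (x - 1)) * (x' * y') = x * y * x' * y' - 1 := by
        have h2 : ((x - 1) * (y - 1) - (y - 1) * (x - 1)) * (x' * y') =
            x * (y * (x' * y')) - y * ((x * x') * y') := by noncomm_ring
        rw [h2, hx, one_mul, hy]
        noncomm_ring
      have hc : (((⁅p, q⁆ : G) : Aˣ) : A) = x * y * x' * y' := by
        simp only [commutatorElement_def]
        push_cast
        rfl
      show (((⁅p, q⁆ : G) : Aˣ) : A) - 1 ∈ strongDerivedSeries K I (n + 1)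
      rw [hc, ← key]
      exact mulA_mem _ (bracket_mem _ _ (ih p hp) (ih q hq)) _
    exact fun g hg => hle hg

end Grp

/-- if `I` is a strongly Lie solvable ideal of `A` and `G` is a subgroup of units
contained in `1 + I`, then `G` is solvable of derived length at most the strong Lie derived
length of `I`. -/
theorem isSolvable_of_strongly_lie_solvable
    {K A : Type*} [Field K] [Ring A] [Algebra K A]
    (I : Submodule K A) (hI : ∀ a : A, ∀ x ∈ I, a * x ∈ I ∧ x * a ∈ I)
    (G : Subgroup Aˣ) (hG : ∀ g ∈ G, ((g : Aˣ) : A) - 1 ∈ I)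
    (hsolv : ∃ n, strongDerivedSeries K I n = ⊥) :
    IsSolvable G ∧ ∀ n, strongDerivedSeries K I n = ⊥ → derivedSeries G n = ⊥ := by
  have h2 : ∀ n, strongDerivedSeries K I n = ⊥ → derivedSeries G n = ⊥ := by
    intro n hn
    rw [eq_bot_iff]
    intro g hg
    have hm := main_induction I hI G hG n g hg
    rw [hn, Submodule.mem_bot, sub_eq_zero] at hm
    have hu : (g : Aˣ) = 1 := Units.ext hm
    have : g = 1 := Subtype.ext hu
    simpa [this] using Subgroup.mem_bot.mpr rfl
  obtain ⟨n, hn⟩ := hsolv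
  exact ⟨⟨⟨n, h2 n hn⟩⟩, h2⟩
end

section
/- Let X be a locally finite poset and K a field, and let U_1 = δ + J be the group of elements of the incidence algebra I(X,K) whose diagonal entries are all 1. Then the following are equivalent: (1) U_1 is solvable; (2) U_1 is nilpotent; (3) X is bounded. Moreover, in this case U_1 has nilpotency class l(X) and derived length ⌈log_2(l(X)+1)⌉. -/
open IncidenceAlgebra

variable {K : Type*} [Field K] {X : Type*} [PartialOrder X] [LocallyFiniteOrder X] [DecidableEq X]

/-- The length `l(x,y)` of the interval `[x,y]`: the supremum of `|C| - 1` over finite chains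
`C ⊆ [x,y]`. -/
noncomputable def intervalLength (x y : X) : ℕ∞ := (Set.Icc x y).chainHeight (· < ·) - 1

/-- `Z_k`: the set of elements `α` of the incidence algebra with `α x y = 0` whenever
`l(x,y) ≤ k - 1`. -/
def zSet (K : Type*) [Field K] (X : Type*) [PartialOrder X] [LocallyFiniteOrder X]
    [DecidableEq X] (k : ℕ) : Set (IncidenceAlgebra K X) :=
  {f | ∀ x y : X, x ≤ y → intervalLength x y ≤ (k : ℕ∞) - 1 → f x y = 0}


/-- The group `U₁ = δ + J` of elements of the incidence algebra whose diagonal entries are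
all `1`, as a subgroup of the group of units. -/
def unipotentSubgroup (K : Type*) [Field K] (X : Type*) [PartialOrder X] [LocallyFiniteOrder X]
    [DecidableEq X] : Subgroup (IncidenceAlgebra K X)ˣ where
  carrier := {g | ∀ x : X, ((g : (IncidenceAlgebra K X)ˣ) : IncidenceAlgebra K X) x x = 1}
  one_mem' := fun x => by simp
  mul_mem' := @fun g h hg hh x => by
    rw [Units.val_mul, IncidenceAlgebra.mul_apply, Finset.Icc_self, Finset.sum_singleton,
      hg x, hh x, one_mul]
  inv_mem' := @fun g hg x => by
    have h1 : ((g⁻¹ * g : (IncidenceAlgebra K X)ˣ) : IncidenceAlgebra K X) x x = 1 := by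
      rw [inv_mul_cancel]; simp
    rwa [Units.val_mul, IncidenceAlgebra.mul_apply, Finset.Icc_self, Finset.sum_singleton,
      hg x, mul_one] at h1

/-! ### Auxiliary material -/

set_option linter.unusedSectionVars false

open scoped commutatorElement

section ENatLemmas

lemma enat_sub_helper {a b c : ℕ∞} (ha : 1 ≤ a) (hb : 1 ≤ b) (h : a + b ≤ c + 1) :
    a - 1 + (b - 1) ≤ c - 1 := by
  induction c using ENat.recTopCoe with
  | top => simp
  | coe c =>
    induction a using ENat.recTopCoe with
    | top => rw [top_add, top_le_iff] at h
             exact absurd h (WithTop.add_ne_top.2 ⟨WithTop.coe_ne_top, WithTop.one_ne_top⟩)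
    | coe a =>
      induction b using ENat.recTopCoe with
      | top => rw [add_top, top_le_iff] at h
               exact absurd h (WithTop.add_ne_top.2 ⟨WithTop.coe_ne_top, WithTop.one_ne_top⟩)
      | coe b =>
        have h' : a + b ≤ c + 1 := by exact_mod_cast h
        have ha' : 1 ≤ a := by exact_mod_cast ha
        have hb' : 1 ≤ b := by exact_mod_cast hb
        have h2 : a - 1 + (b - 1) ≤ c - 1 := by omega
        rw [show (1:ℕ∞) = ((1:ℕ):ℕ∞) from rfl, ← ENat.coe_sub, ← ENat.coe_sub, ← ENat.coe_sub]
        exact_mod_cast h2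

end ENatLemmas

section IntervalLength

lemma pair_subchain {x y : X} (h : x < y) : IsChain (· < ·) ({x, y} : Set X) := by
  intro a ha b hb hab
  simp only [Set.mem_insert_iff, Set.mem_singleton_iff] at ha hb
  rcases ha with rfl | rfl <;> rcases hb with rfl | rfl <;> simp_all

lemma one_le_intervalLength {x y : X} (h : x < y) : 1 ≤ intervalLength x y := by
  have h2 : ((2:ℕ):ℕ∞) ≤ (Set.Icc x y).chainHeight (· < ·) :=
    by
      have := Set.encard_le_chainHeight_of_isChain (Set.Icc x y) {x, y}
        (by intro a ha; simp only [Set.mem_insert_iff, Set.mem_singleton_iff] at ha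
            rcases ha with rfl | rfl <;> simp [h.le]) (pair_subchain h)
      rwa [Set.encard_pair h.ne] at this
  have := tsub_le_tsub_right h2 1
  rw [show (((2:ℕ):ℕ∞) - 1) = 1 by decide] at this
  exact this

lemma eq_of_intervalLength_le_zero {x y : X} (hxy : x ≤ y) (h : intervalLength x y ≤ 0) :
    x = y := by
  by_contra hne
  have := (one_le_intervalLength (lt_of_le_of_ne hxy hne)).trans h
  exact absurd this (by norm_num)

lemma intervalLength_add {x z y : X} (hxz : x ≤ z) (hzy : z ≤ y) :
    intervalLength x z + intervalLength z y ≤ intervalLength x y := by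
  have hins : Set.Icc z y = insert z (Set.Ioc z y) := by
    ext a; simp only [Set.mem_Icc, Set.mem_Ioc, Set.mem_insert_iff]
    constructor
    · rintro ⟨h1, h2⟩; rcases eq_or_lt_of_le h1 with rfl | h1 <;> tauto
    · rintro (rfl | ⟨h1, h2⟩); exacts [⟨le_refl _, hzy⟩, ⟨h1.le, h2⟩]
  have key : (Set.Icc x z).chainHeight (· < ·) + (Set.Icc z y).chainHeight (· < ·)
      ≤ (Set.Icc x y).chainHeight (· < ·) + 1 := by
    haveI : Nonempty {t : Set X // t ⊆ Set.Icc x z ∧ IsChain (· < ·) t} := ⟨⟨∅, by simp⟩⟩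
    haveI : Nonempty {t : Set X // t ⊆ Set.Icc z y ∧ IsChain (· < ·) t} := ⟨⟨∅, by simp⟩⟩
    rw [Set.chainHeight_eq_iSup, Set.chainHeight_eq_iSup (Set.Icc z y)]
    refine ENat.iSup_add_iSup_le fun t u => ?_
    obtain ⟨t, ht, htc⟩ := t
    obtain ⟨u, hu, huc⟩ := u
    have hdisj : Disjoint t (u \ {z}) := by
      rw [Set.disjoint_left]; intro a hat hau
      exact hau.2 (le_antisymm (ht hat).2 (hu hau.1).1)
    have hsub : t ∪ (u \ {z}) ⊆ Set.Icc x y := by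
      rintro a (ha | ha)
      · exact ⟨(ht ha).1, (ht ha).2.trans hzy⟩
      · exact ⟨hxz.trans (hu ha.1).1, (hu ha.1).2⟩
    have hgt : ∀ a ∈ t, ∀ b ∈ u \ {z}, a < b := fun a ha b hb =>
      lt_of_le_of_lt (ht ha).2 (lt_of_le_of_ne (hu hb.1).1 (Ne.symm hb.2))
    have hchain : IsChain (· < ·) (t ∪ (u \ {z})) := by
      rintro a (ha | ha) b (hb | hb) hab
      · exact htc ha hb hab
      · exact Or.inl (hgt a ha b hb)
      · exact Or.inr (hgt b hb a ha)
      · exact huc ha.1 hb.1 hab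
    have h1 := Set.encard_le_chainHeight_of_isChain _ _ hsub hchain
    rw [Set.encard_union_eq hdisj] at h1
    have h2 : u.encard ≤ (u \ {z}).encard + 1 := by
      calc u.encard ≤ (u \ {z} ∪ {z}).encard := Set.encard_le_encard (fun a ha => by
            by_cases hz : a = z
            · exact Or.inr hz
            · exact Or.inl ⟨ha, hz⟩)
        _ ≤ (u \ {z}).encard + ({z} : Set X).encard := Set.encard_union_le _ _
        _ = (u \ {z}).encard + 1 := by rw [Set.encard_singleton]
    calc t.encard + u.encard ≤ t.encard + ((u \ {z}).encard + 1) := by gcongr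
      _ = (t.encard + (u \ {z}).encard) + 1 := (add_assoc _ _ _).symm
      _ ≤ _ := by gcongr
  exact enat_sub_helper ((Set.one_le_chainHeight_iff (Set.Icc x z) (· < ·)).2 ⟨x, le_refl x, hxz⟩)
    ((Set.one_le_chainHeight_iff (Set.Icc z y) (· < ·)).2 ⟨z, le_refl z, hzy⟩) key

end IntervalLength

section ZSetLemmas

lemma zSet_zero_mem (k : ℕ) : (0 : IncidenceAlgebra K X) ∈ zSet K X k :=
  fun _ _ _ _ => rfl

lemma zSet_add_mem {k : ℕ} {f g : IncidenceAlgebra K X} (hf : f ∈ zSet K X k)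
    (hg : g ∈ zSet K X k) : f + g ∈ zSet K X k := fun x y hxy hl => by
  rw [IncidenceAlgebra.add_apply, hf x y hxy hl, hg x y hxy hl, add_zero]

lemma zSet_sub_mem {k : ℕ} {f g : IncidenceAlgebra K X} (hf : f ∈ zSet K X k)
    (hg : g ∈ zSet K X k) : f - g ∈ zSet K X k := fun x y hxy hl => by
  rw [IncidenceAlgebra.sub_apply, hf x y hxy hl, hg x y hxy hl, sub_zero]

lemma zSet_neg_mem {k : ℕ} {f : IncidenceAlgebra K X} (hf : f ∈ zSet K X k) :
    -f ∈ zSet K X k := fun x y hxy hl => by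
  rw [IncidenceAlgebra.neg_apply, hf x y hxy hl, neg_zero]

lemma zSet_antitone {j k : ℕ} (hjk : j ≤ k) : zSet K X k ⊆ zSet K X j := by
  intro f hf x y hxy hl
  refine hf x y hxy (hl.trans ?_)
  exact tsub_le_tsub_right (by exact_mod_cast hjk) 1

lemma zSet_mul_mem {i j : ℕ} (hi : 1 ≤ i) (hj : 1 ≤ j) {f g : IncidenceAlgebra K X}
    (hf : f ∈ zSet K X i) (hg : g ∈ zSet K X j) : f * g ∈ zSet K X (i + j) := by
  intro x y hxy hl
  rw [mul_apply]
  refine Finset.sum_eq_zero fun z hz => ?_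
  rw [Finset.mem_Icc] at hz
  by_cases h1 : intervalLength x z ≤ (i : ℕ∞) - 1
  · rw [hf x z hz.1 h1, zero_mul]
  by_cases h2 : intervalLength z y ≤ (j : ℕ∞) - 1
  · rw [hg z y hz.2 h2, mul_zero]
  exfalso
  have hi' : (i : ℕ∞) ≤ intervalLength x z := by
    have := lt_of_not_ge h1
    rw [show ((i:ℕ∞) - 1) = ((i-1:ℕ):ℕ∞) by rw [ENat.coe_sub]; rfl] at this
    rw [show ((i:ℕ∞)) = (((i-1)+1:ℕ):ℕ∞) by congr 1; omega]
    exact_mod_cast Order.add_one_le_of_lt this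
  have hj' : (j : ℕ∞) ≤ intervalLength z y := by
    have := lt_of_not_ge h2
    rw [show ((j:ℕ∞) - 1) = ((j-1:ℕ):ℕ∞) by rw [ENat.coe_sub]; rfl] at this
    rw [show ((j:ℕ∞)) = (((j-1)+1:ℕ):ℕ∞) by congr 1; omega]
    exact_mod_cast Order.add_one_le_of_lt this
  have hsum : ((i + j : ℕ) : ℕ∞) ≤ intervalLength x y :=
    calc ((i+j:ℕ):ℕ∞) = (i:ℕ∞) + j := by push_cast; ring
    _ ≤ intervalLength x z + intervalLength z y := add_le_add hi' hj'
    _ ≤ intervalLength x y := intervalLength_add hz.1 hz.2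
  have hle : ((i+j:ℕ):ℕ∞) ≤ ((i+j:ℕ):ℕ∞) - 1 := hsum.trans hl
  have hlt : ((i+j:ℕ):ℕ∞) - 1 < ((i+j:ℕ):ℕ∞) := by
    rw [show (((i+j:ℕ):ℕ∞) - 1) = ((i+j-1:ℕ):ℕ∞) by rw [ENat.coe_sub]; rfl]
    exact_mod_cast (by omega : i + j - 1 < i + j)
  exact absurd hle (not_le_of_gt hlt)

end ZSetLemmas

section RingLemmas

lemma ring_unit_aux {R : Type*} [Ring R] (e : R) (he : e * e = 0) :
    (1 + e) * (1 - e) = 1 := by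
  have h : (1 + e) * (1 - e) = 1 - e * e := by noncomm_ring
  rw [h, he, sub_zero]

lemma ring_unit_aux' {R : Type*} [Ring R] (e : R) (he : e * e = 0) :
    (1 - e) * (1 + e) = 1 := by
  have h : (1 - e) * (1 + e) = 1 - e * e := by noncomm_ring
  rw [h, he, sub_zero]

lemma ring_comm_aux {R : Type*} [Ring R] (a b : R) (ha : a * a = 0) (hb : b * b = 0)
    (hba : b * a = 0) : (1 + a) * (1 + b) * ((1 - a) * (1 - b)) = 1 + a * b := by
  have h1 : ∀ x : R, a * (a * x) = 0 := fun x => by rw [← mul_assoc, ha, zero_mul]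
  have h2 : ∀ x : R, b * (b * x) = 0 := fun x => by rw [← mul_assoc, hb, zero_mul]
  have h3 : ∀ x : R, b * (a * x) = 0 := fun x => by rw [← mul_assoc, hba, zero_mul]
  simp only [mul_add, add_mul, mul_sub, sub_mul, mul_one, one_mul, mul_assoc,
    ha, hb, hba, h1, h2, h3, mul_zero, zero_mul, add_zero, zero_add, sub_zero, zero_sub]
  abel

lemma ring_gh_aux {R : Type*} [Ring R] (g h : R) :
    g * h - 1 = (g - 1) + (h - 1) + (g - 1) * (h - 1) := by noncomm_ring

lemma ring_comm_sub {R : Type*} [Ring R] (g h : R) :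
    g * h - h * g = (g - 1) * (h - 1) - (h - 1) * (g - 1) := by noncomm_ring

lemma ring_comm_factor {R : Type*} [Ring R] (g h gi hi : R) (hg : g * gi = 1) (hh : h * hi = 1) :
    g * h * gi * hi - 1 = (g * h - h * g) * (gi * hi) := by
  have key : (g * h - h * g) * (gi * hi) = g * h * gi * hi - h * (g * gi) * hi := by noncomm_ring
  rw [key, hg, mul_one, hh]

lemma ring_inv_sub {R : Type*} [Ring R] (g gi : R) (h : gi * g = 1) :
    gi - 1 = -((g - 1) + (gi - 1) * (g - 1)) := by
  have key : -((g - 1) + (gi - 1) * (g - 1)) = -(gi * g) + gi := by noncomm_ring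
  rw [key, h]; abel

end RingLemmas

section Esingle

/-- The "matrix unit" with a 1 in position (x,y). -/
def esingle (K : Type*) [Field K] {X : Type*} [PartialOrder X] [DecidableEq X]
    (x y : X) (hxy : x ≤ y) : IncidenceAlgebra K X :=
  ⟨fun a b => if a = x ∧ b = y then 1 else 0, by
    intro a b h
    simp only [ite_eq_right_iff, and_imp]
    rintro rfl rfl
    exact absurd hxy h⟩

lemma esingle_apply (x y a b : X) (hxy : x ≤ y) :
    esingle K x y hxy a b = if a = x ∧ b = y then 1 else 0 := rfl

lemma esingle_mul_esingle_of_ne {x y z w : X} (hxy : x ≤ y) (hzw : z ≤ w) (h : y ≠ z) :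
    (esingle K x y hxy) * (esingle K z w hzw) = 0 := by
  ext a b hab
  rw [mul_apply, IncidenceAlgebra.zero_apply]
  refine Finset.sum_eq_zero fun c _ => ?_
  rw [esingle_apply, esingle_apply]
  rcases eq_or_ne c y with rfl | hc
  · rw [if_neg (fun hh : c = z ∧ b = w => h hh.1), mul_zero]
  · rw [if_neg (fun hh : a = x ∧ c = y => hc hh.2), zero_mul]

lemma esingle_mul_esingle {x y z : X} (hxy : x ≤ y) (hyz : y ≤ z) :
    (esingle K x y hxy) * (esingle K y z hyz) = esingle K x z (hxy.trans hyz) := by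
  ext a b hab
  rw [mul_apply, esingle_apply]
  by_cases hax : a = x ∧ b = z
  · obtain ⟨rfl, rfl⟩ := hax
    rw [if_pos ⟨rfl, rfl⟩]
    have hy : y ∈ Finset.Icc a b := Finset.mem_Icc.2 ⟨hxy, hyz⟩
    rw [Finset.sum_eq_single_of_mem y hy]
    · rw [esingle_apply, esingle_apply, if_pos ⟨rfl, rfl⟩, if_pos ⟨rfl, rfl⟩, one_mul]
    · intro c _ hc
      rw [esingle_apply, esingle_apply, if_neg (fun hh : a = a ∧ c = y => hc hh.2), zero_mul]
  · rw [if_neg hax]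
    refine Finset.sum_eq_zero fun c hc => ?_
    rw [esingle_apply, esingle_apply]
    rcases eq_or_ne a x with rfl | ha
    · rcases eq_or_ne b z with rfl | hb
      · exact absurd ⟨rfl, rfl⟩ hax
      · rw [if_neg (fun hh : c = y ∧ b = z => hb hh.2), mul_zero]
    · rw [if_neg (fun hh : a = x ∧ c = y => ha hh.1), zero_mul]

lemma esingle_mul_self {x y : X} (hxy : x < y) :
    (esingle K x y hxy.le) * (esingle K x y hxy.le) = 0 :=
  esingle_mul_esingle_of_ne _ _ hxy.ne'

lemma esingle_mem_zSet {x y : X} (hxy : x < y) (k : ℕ)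
    (hk : ¬ intervalLength x y ≤ (k : ℕ∞) - 1) : esingle K x y hxy.le ∈ zSet K X k := by
  intro a b hab hl
  rw [esingle_apply]
  refine if_neg fun hh => ?_
  obtain ⟨rfl, rfl⟩ := hh
  exact hk hl

end Esingle

section Units

/-- The unit `1 + e_{xy}` of the incidence algebra. -/
def eunit (K : Type*) [Field K] {X : Type*} [PartialOrder X] [LocallyFiniteOrder X]
    [DecidableEq X] (x y : X) (hxy : x < y) : (IncidenceAlgebra K X)ˣ where
  val := 1 + esingle K x y hxy.le
  inv := 1 - esingle K x y hxy.le
  val_inv := ring_unit_aux _ (esingle_mul_self hxy)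
  inv_val := ring_unit_aux' _ (esingle_mul_self hxy)

lemma eunit_mem {x y : X} (hxy : x < y) : eunit K x y hxy ∈ unipotentSubgroup K X := by
  intro w
  show (1 + esingle K x y hxy.le) w w = 1
  rw [IncidenceAlgebra.add_apply, IncidenceAlgebra.one_apply, if_pos rfl, esingle_apply,
    if_neg (fun hh : w = x ∧ w = y => hxy.ne (hh.1 ▸ hh.2 ▸ rfl)), add_zero]

/-- The unit `1 + e_{xy}` as an element of the unipotent subgroup. -/
def eunitG (K : Type*) [Field K] {X : Type*} [PartialOrder X] [LocallyFiniteOrder X]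
    [DecidableEq X] (x y : X) (hxy : x < y) : ↥(unipotentSubgroup K X) :=
  ⟨eunit K x y hxy, eunit_mem hxy⟩

/-- The underlying incidence-algebra element of a member of the unipotent subgroup. -/
def uval (g : ↥(unipotentSubgroup K X)) : IncidenceAlgebra K X :=
  ((g : (IncidenceAlgebra K X)ˣ) : IncidenceAlgebra K X)

lemma uval_one : uval (1 : ↥(unipotentSubgroup K X)) = 1 := rfl

lemma uval_mul (g h : ↥(unipotentSubgroup K X)) : uval (g * h) = uval g * uval h := rfl

lemma uval_inv_mul (g : ↥(unipotentSubgroup K X)) : uval g⁻¹ * uval g = 1 :=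
  Units.inv_mul _

lemma uval_mul_inv (g : ↥(unipotentSubgroup K X)) : uval g * uval g⁻¹ = 1 :=
  Units.mul_inv _

lemma uval_commutator (g h : ↥(unipotentSubgroup K X)) :
    uval ⁅g, h⁆ = uval g * uval h * uval g⁻¹ * uval h⁻¹ := rfl

lemma uval_eunitG {x y : X} (hxy : x < y) :
    uval (eunitG K x y hxy) = 1 + esingle K x y hxy.le := rfl

lemma uval_eunitG_inv {x y : X} (hxy : x < y) :
    uval (eunitG K x y hxy)⁻¹ = 1 - esingle K x y hxy.le := rfl

lemma eunitG_ne_one {x y : X} (hxy : x < y) : eunitG K x y hxy ≠ 1 := by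
  intro h
  have h2 : uval (eunitG K x y hxy) = uval 1 := by rw [h]
  rw [uval_eunitG, uval_one] at h2
  have h3 : (1 + esingle K x y hxy.le) x y = (1 : IncidenceAlgebra K X) x y := by rw [h2]
  simp only [IncidenceAlgebra.add_apply, IncidenceAlgebra.one_apply, esingle_apply, if_neg hxy.ne,
    if_pos (⟨rfl, rfl⟩ : x = x ∧ y = y), zero_add] at h3
  exact one_ne_zero h3

lemma eunitG_commutator {x y z : X} (hxy : x < y) (hyz : y < z) :
    ⁅eunitG K x y hxy, eunitG K y z hyz⁆ = eunitG K x z (hxy.trans hyz) := by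
  apply Subtype.ext
  apply Units.ext
  show uval ⁅eunitG K x y hxy, eunitG K y z hyz⁆ = uval (eunitG K x z (hxy.trans hyz))
  rw [uval_commutator, uval_eunitG, uval_eunitG, uval_eunitG_inv, uval_eunitG_inv, uval_eunitG]
  rw [mul_assoc ((1 + esingle K x y hxy.le) * (1 + esingle K y z hyz.le))]
  rw [ring_comm_aux _ _ (esingle_mul_self hxy) (esingle_mul_self hyz)
    (esingle_mul_esingle_of_ne _ _ (hxy.trans hyz).ne'), esingle_mul_esingle]

lemma diag_mem_zSet_one (g : ↥(unipotentSubgroup K X)) : uval g - 1 ∈ zSet K X 1 := by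
  intro x y hxy hl
  have hxy' : x = y := eq_of_intervalLength_le_zero hxy (by
    rwa [show (((1:ℕ)):ℕ∞) - 1 = 0 by decide] at hl)
  subst hxy'
  rw [IncidenceAlgebra.sub_apply, IncidenceAlgebra.one_apply, if_pos rfl]
  show ((g : (IncidenceAlgebra K X)ˣ) : IncidenceAlgebra K X) x x - 1 = 0
  rw [g.2 x, sub_self]

end Units

section HsubDef

/-- The filtration subgroups. -/
def Hsub (K : Type*) [Field K] (X : Type*) [PartialOrder X] [LocallyFiniteOrder X]
    [DecidableEq X] (k : ℕ) : Subgroup ↥(unipotentSubgroup K X) where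
  carrier := {g | uval g - 1 ∈ zSet K X (max k 1)}
  one_mem' := by
    show uval (1 : ↥(unipotentSubgroup K X)) - 1 ∈ zSet K X (max k 1)
    rw [uval_one, sub_self]
    exact zSet_zero_mem _
  mul_mem' := @fun g h hg hh => by
    show uval (g * h) - 1 ∈ zSet K X (max k 1)
    rw [uval_mul, ring_gh_aux]
    refine zSet_add_mem (zSet_add_mem hg hh)
      (zSet_antitone (by omega : max k 1 ≤ max k 1 + max k 1) ?_)
    exact zSet_mul_mem (le_max_right _ _) (le_max_right _ _) hg hh
  inv_mem' := @fun g hg => by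
    show uval g⁻¹ - 1 ∈ zSet K X (max k 1)
    rw [ring_inv_sub (uval g) (uval g⁻¹) (uval_inv_mul g)]
    refine zSet_neg_mem (zSet_add_mem hg
      (zSet_antitone (by omega : max k 1 ≤ 1 + max k 1) ?_))
    exact zSet_mul_mem le_rfl (le_max_right _ _) (diag_mem_zSet_one g⁻¹) hg

lemma mem_Hsub_iff {k : ℕ} {g : ↥(unipotentSubgroup K X)} :
    g ∈ Hsub K X k ↔ uval g - 1 ∈ zSet K X (max k 1) := Iff.rfl

lemma top_le_Hsub_one : (⊤ : Subgroup ↥(unipotentSubgroup K X)) ≤ Hsub K X 1 := by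
  intro g _
  rw [mem_Hsub_iff]
  simpa using diag_mem_zSet_one g

lemma commutator_mem_Hsub {i j : ℕ} {g h : ↥(unipotentSubgroup K X)}
    (hg : g ∈ Hsub K X i) (hh : h ∈ Hsub K X j) : ⁅g, h⁆ ∈ Hsub K X (i + j) := by
  rw [mem_Hsub_iff] at hg hh ⊢
  have hfac : uval ⁅g, h⁆ - 1
      = (uval g * uval h - uval h * uval g) * (uval g⁻¹ * uval h⁻¹) := by
    rw [uval_commutator]
    exact ring_comm_factor _ _ _ _ (uval_mul_inv g) (uval_mul_inv h)
  have hd : uval g * uval h - uval h * uval g ∈ zSet K X (max i 1 + max j 1) := by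
    rw [ring_comm_sub]
    exact zSet_sub_mem
      (zSet_mul_mem (le_max_right _ _) (le_max_right _ _) hg hh)
      (zSet_antitone (by omega : max i 1 + max j 1 ≤ max j 1 + max i 1)
        (zSet_mul_mem (le_max_right _ _) (le_max_right _ _) hh hg))
  have hw : uval g⁻¹ * uval h⁻¹ = 1 + (uval (g⁻¹ * h⁻¹) - 1) := by
    rw [uval_mul]; abel
  rw [hfac, hw, mul_add, mul_one]
  refine zSet_antitone (by omega : max (i + j) 1 ≤ max i 1 + max j 1) ?_
  refine zSet_add_mem hd ?_
  refine zSet_antitone (by omega : max i 1 + max j 1 ≤ (max i 1 + max j 1) + 1) ?_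
  exact zSet_mul_mem (by omega) le_rfl hd (diag_mem_zSet_one (g⁻¹ * h⁻¹))

lemma commutator_le_Hsub {i j : ℕ} {A B : Subgroup ↥(unipotentSubgroup K X)}
    (hA : A ≤ Hsub K X i) (hB : B ≤ Hsub K X j) : ⁅A, B⁆ ≤ Hsub K X (i + j) :=
  Subgroup.commutator_le.2 fun g hg h hh => commutator_mem_Hsub (hA hg) (hB hh)

lemma lcs_le_Hsub (n : ℕ) :
    (⊤ : Subgroup ↥(unipotentSubgroup K X)).lowerCentralSeries n ≤ Hsub K X (n + 1) := by
  induction n with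
  | zero => exact top_le_Hsub_one
  | succ n ih =>
    show ⁅(⊤ : Subgroup ↥(unipotentSubgroup K X)).lowerCentralSeries n, ⊤⁆ ≤ Hsub K X (n + 2)
    exact commutator_le_Hsub (i := n + 1) (j := 1) ih top_le_Hsub_one

lemma derived_le_Hsub (n : ℕ) :
    derivedSeries ↥(unipotentSubgroup K X) n ≤ Hsub K X (2 ^ n) := by
  induction n with
  | zero => exact top_le_Hsub_one
  | succ n ih =>
    rw [derivedSeries_succ]
    have := commutator_le_Hsub (i := 2 ^ n) (j := 2 ^ n) ih ih
    rwa [show 2 ^ n + 2 ^ n = 2 ^ (n + 1) by rw [pow_succ]; omega] at this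

lemma Hsub_eq_bot {k : ℕ}
    (hk : ∀ x y : X, x ≤ y → intervalLength x y ≤ ((max k 1 : ℕ) : ℕ∞) - 1) :
    Hsub K X k = ⊥ := by
  rw [eq_bot_iff]
  intro g hg
  rw [mem_Hsub_iff] at hg
  rw [Subgroup.mem_bot]
  apply Subtype.ext
  apply Units.ext
  show uval g = uval 1
  rw [uval_one]
  ext a b hab
  have := hg a b hab (hk a b hab)
  rw [IncidenceAlgebra.sub_apply] at this
  exact sub_eq_zero.1 this

end HsubDef
section Chains

lemma exists_strictChain (n : ℕ)
    (hn : ((n + 1 : ℕ) : ℕ∞) ≤ (Set.univ : Set X).chainHeight (· < ·)) :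
    ∃ f : ℕ → X, ∀ i j, i < j → j ≤ n → f i < f j := by
  classical
  obtain ⟨t, -, ht, htc⟩ := Set.exists_isChain_of_le_chainHeight (n + 1) hn
  letI : LinearOrder t := (htc.mono_rel fun _ _ h => h.le).linearOrder
  have hfin : t.Finite := Set.finite_of_encard_eq_coe ht
  letI : Fintype t := hfin.fintype
  have hcard : Fintype.card t = n + 1 := by
    have h1 := Set.encard_eq_coe_toFinset_card t
    rw [ht, Set.toFinset_card] at h1
    exact_mod_cast h1.symm
  let e := Fintype.orderIsoFinOfCardEq t hcard
  refine ⟨fun i => ((e ⟨min i n, by omega⟩ : t) : X), fun i j hij hj => ?_⟩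
  have : e ⟨min i n, by omega⟩ < e ⟨min j n, by omega⟩ :=
    e.strictMono (Fin.mk_lt_mk.2 (by omega))
  exact this

lemma eunitG_mem_lcs : ∀ (n : ℕ) (f : ℕ → X),
    (∀ i j, i < j → j ≤ n + 1 → f i < f j) → ∀ h0 : f 0 < f (n + 1),
    eunitG K (f 0) (f (n + 1)) h0 ∈ (⊤ : Subgroup ↥(unipotentSubgroup K X)).lowerCentralSeries n := by
  intro n
  induction n with
  | zero => intro f hf h0; exact Subgroup.mem_top _
  | succ n ih =>
    intro f hf h0
    have h01 : f 0 < f (n + 1) := hf 0 (n + 1) (by omega) (by omega)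
    have ha := ih f (fun i j hij hj => hf i j hij (by omega)) h01
    have hb : f (n + 1) < f (n + 2) := hf (n + 1) (n + 2) (by omega) (by omega)
    have hc := Subgroup.commutator_mem_commutator ha
      (Subgroup.mem_top (eunitG K (f (n + 1)) (f (n + 2)) hb))
    rw [eunitG_commutator] at hc
    exact hc

lemma eunitG_mem_derived : ∀ (n m : ℕ) (f : ℕ → X),
    (∀ i j, i < j → j ≤ m + 2 ^ n → f i < f j) → ∀ h0 : f m < f (m + 2 ^ n),
    eunitG K (f m) (f (m + 2 ^ n)) h0 ∈ derivedSeries ↥(unipotentSubgroup K X) n := by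
  intro n
  induction n with
  | zero => intro m f hf h0; exact Subgroup.mem_top _
  | succ n ih =>
    intro m f hf
    have hp : 0 < 2 ^ n := pow_pos (by norm_num) n
    have hidx : m + 2 ^ (n + 1) = m + 2 ^ n + 2 ^ n := by rw [pow_succ]; omega
    rw [hidx]
    intro h0
    have ha := ih m f (fun i j hij hj => hf i j hij (by omega))
      (hf m (m + 2 ^ n) (by omega) (by omega))
    have hb := ih (m + 2 ^ n) f (fun i j hij hj => hf i j hij (by omega))
      (hf (m + 2 ^ n) (m + 2 ^ n + 2 ^ n) (by omega) (by omega))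
    have hc := Subgroup.commutator_mem_commutator ha hb
    rw [eunitG_commutator] at hc
    rw [derivedSeries_succ]
    exact hc

end Chains

/-- `U₁` is solvable iff nilpotent iff `X` is bounded; in this case `U₁` has
nilpotency class `l(X)` and derived length `⌈log₂(l(X)+1)⌉`. -/
theorem unipotentSubgroup_solvable_iff :
    (IsSolvable ↥(unipotentSubgroup K X) ↔ (Set.univ : Set X).chainHeight (· < ·) ≠ ⊤) ∧
    (Group.IsNilpotent ↥(unipotentSubgroup K X) ↔ (Set.univ : Set X).chainHeight (· < ·) ≠ ⊤) ∧
    ((Set.univ : Set X).chainHeight (· < ·) ≠ ⊤ →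
      sInf {n | (⊤ : Subgroup ↥(unipotentSubgroup K X)).lowerCentralSeries n = ⊥} =
        ((Set.univ : Set X).chainHeight (· < ·) - 1).toNat ∧
      sInf {n | derivedSeries ↥(unipotentSubgroup K X) n = ⊥} =
        Nat.clog 2 (((Set.univ : Set X).chainHeight (· < ·) - 1).toNat + 1)) := by
  by_cases hne : (Set.univ : Set X).chainHeight (· < ·) = ⊤
  · -- unbounded case
    have hnotsolv : ¬ IsSolvable ↥(unipotentSubgroup K X) := by
      intro hs
      obtain ⟨n, hn⟩ := (isSolvable_def _).1 hs
      obtain ⟨f, hf⟩ := exists_strictChain (2 ^ n) (by rw [hne]; exact le_top)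
      have hp : 0 < 2 ^ n := pow_pos (by norm_num) n
      have h0 : f 0 < f (0 + 2 ^ n) := hf 0 (0 + 2 ^ n) (by omega) (by omega)
      have hmem := eunitG_mem_derived (K := K) n 0 f
        (fun i j hij hj => hf i j hij (by omega)) h0
      rw [hn, Subgroup.mem_bot] at hmem
      exact eunitG_ne_one h0 hmem
    have hnotnilp : ¬ Group.IsNilpotent ↥(unipotentSubgroup K X) := by
      intro hnil
      exact hnotsolv (@IsNilpotent.to_isSolvable _ _ hnil)
    exact ⟨⟨fun hs => absurd hs hnotsolv, fun hh => absurd hne hh⟩,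
      ⟨fun hs => absurd hs hnotnilp, fun hh => absurd hne hh⟩,
      fun hh => absurd hne hh⟩
  · -- bounded case
    obtain ⟨hn, hhn⟩ : ∃ m : ℕ, (Set.univ : Set X).chainHeight (· < ·) = (m : ℕ∞) :=
      ⟨_, (ENat.coe_toNat hne).symm⟩
    set L : ℕ := ((Set.univ : Set X).chainHeight (· < ·) - 1).toNat with hL
    have hcoesub : ∀ k : ℕ, ((k : ℕ) : ℕ∞) - 1 = ((k - 1 : ℕ) : ℕ∞) := fun k => by
      rw [show ((1:ℕ∞)) = ((1:ℕ):ℕ∞) from rfl, ← ENat.coe_sub]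
    have hLn : L = hn - 1 := by rw [hL, hhn, hcoesub, ENat.toNat_coe]
    have hLcast : ((L : ℕ) : ℕ∞) = (Set.univ : Set X).chainHeight (· < ·) - 1 := by
      rw [hLn, hhn, hcoesub]
    have hIcc : ∀ x y : X, intervalLength x y ≤ ((L : ℕ) : ℕ∞) := by
      intro x y
      rw [hLcast]
      exact tsub_le_tsub_right (Set.chainHeight_mono _ _ _ (Set.subset_univ _)) 1
    -- the chain length bound for extracting chains
    have hchainle : ∀ t : ℕ, 1 ≤ t → t ≤ L → ((t + 1 : ℕ) : ℕ∞) ≤ (Set.univ : Set X).chainHeight (· < ·) := by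
      intro t ht1 htL
      rw [hhn]
      exact_mod_cast (by omega : t + 1 ≤ hn)
    -- the upper bounds
    have hγbot : (⊤ : Subgroup ↥(unipotentSubgroup K X)).lowerCentralSeries L = ⊥ := by
      have hball := Hsub_eq_bot (K := K) (X := X) (k := L + 1) (by
        intro x y hxy
        rw [show max (L + 1) 1 = L + 1 by omega, hcoesub (L+1),
          show (L + 1 - 1 : ℕ) = L by omega]
        exact hIcc x y)
      exact le_bot_iff.1 (hball ▸ lcs_le_Hsub L)
    have hDbot : ∀ n : ℕ, L + 1 ≤ 2 ^ n → derivedSeries ↥(unipotentSubgroup K X) n = ⊥ := by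
      intro n hLn
      have hp : 0 < 2 ^ n := pow_pos (by norm_num) n
      have hball := Hsub_eq_bot (K := K) (X := X) (k := 2 ^ n) (by
        intro x y hxy
        rw [show max (2 ^ n) 1 = 2 ^ n by omega, hcoesub (2 ^ n)]
        exact le_trans (hIcc x y) (by exact_mod_cast (by omega : L ≤ 2 ^ n - 1)))
      exact le_bot_iff.1 (hball ▸ derived_le_Hsub n)
    -- the lower bounds
    have hlowγ : ∀ n : ℕ, n < L → (⊤ : Subgroup ↥(unipotentSubgroup K X)).lowerCentralSeries n ≠ ⊥ := by
      intro n hnL hbot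
      obtain ⟨f, hf⟩ := exists_strictChain (n + 1)
        (hchainle (n + 1) (by omega) (by omega))
      have h0 : f 0 < f (n + 1) := hf 0 (n + 1) (by omega) (by omega)
      have hmem := eunitG_mem_lcs (K := K) n f (fun i j hij hj => hf i j hij (by omega)) h0
      rw [hbot, Subgroup.mem_bot] at hmem
      exact eunitG_ne_one h0 hmem
    have hlowD : ∀ n : ℕ, 2 ^ n ≤ L → derivedSeries ↥(unipotentSubgroup K X) n ≠ ⊥ := by
      intro n hnL hbot
      have hp : 0 < 2 ^ n := pow_pos (by norm_num) n
      obtain ⟨f, hf⟩ := exists_strictChain (2 ^ n)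
        (hchainle (2 ^ n) (by omega) (by omega))
      have h0 : f 0 < f (0 + 2 ^ n) := hf 0 (0 + 2 ^ n) (by omega) (by omega)
      have hmem := eunitG_mem_derived (K := K) n 0 f
        (fun i j hij hj => hf i j hij (by omega)) h0
      rw [hbot, Subgroup.mem_bot] at hmem
      exact eunitG_ne_one h0 hmem
    have hnilp : Group.IsNilpotent ↥(unipotentSubgroup K X) :=
      nilpotent_iff_lowerCentralSeries.2 ⟨L, hγbot⟩
    have hsolv : IsSolvable ↥(unipotentSubgroup K X) := @IsNilpotent.to_isSolvable _ _ hnilp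
    refine ⟨⟨fun _ => hne, fun _ => hsolv⟩, ⟨fun _ => hne, fun _ => hnilp⟩, fun _ => ⟨?_, ?_⟩⟩
    · -- nilpotency class
      refine le_antisymm (Nat.sInf_le hγbot) (le_csInf ⟨L, hγbot⟩ fun n hn => ?_)
      by_contra hlt
      exact hlowγ n (by omega) hn
    · -- derived length
      have hc1 : derivedSeries ↥(unipotentSubgroup K X) (Nat.clog 2 (L + 1)) = ⊥ :=
        hDbot _ (Nat.le_pow_clog one_lt_two _)
      refine le_antisymm (Nat.sInf_le hc1) (le_csInf ⟨_, hc1⟩ fun n hn => ?_)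
      rw [Nat.clog_le_iff_le_pow one_lt_two]
      by_contra hcon
      exact hlowD n (by omega) hn
end
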